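/- If H is a connected subgraph of a finite connected graph G that is isometrically embedded in G (i.e., d_H(i,j) = d_G(i,j) for all vertices i,j of H), and H has at least 2 vertices, then QEC(H) ≤ QEC(G). -/
import Mathlib

noncomputable def QEC {V : Type*} [Fintype V] (G : SimpleGraph V) : ℝ :=
  sSup {x : ℝ | ∃ f : V → ℝ,
    (∑ i, f i ^ 2) = 1 ∧ (∑ i, f i) = 0 ∧
    x = ∑ i, ∑ j, (G.dist i j : ℝ) * f i * f j}

lemma ext_sum {V : Type*} [Fintype V] (W : Finset V) (F : V → ℝ)
    (hF : ∀ v ∉ W, F v = 0) : ∑ v, F v = ∑ i : ↥W, F i :=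
  ((Finset.sum_subset (Finset.subset_univ W) (fun v _ hv => hF v hv)).symm).trans
    (Finset.sum_coe_sort W F).symm

theorem qec_isometric_subgraph {V : Type*} [Fintype V] [DecidableEq V]
    (G : SimpleGraph V) (hG : G.Connected)
    (W : Finset V) (hW : 2 ≤ W.card) (H : SimpleGraph ↥W) (hH : H.Connected)
    (hsub : ∀ i j : ↥W, H.Adj i j → G.Adj (i : V) (j : V))
    (hiso : ∀ i j : ↥W, H.dist i j = G.dist (i : V) (j : V)) :
    QEC H ≤ QEC G := by
  classical
  set SH := {x : ℝ | ∃ f : ↥W → ℝ,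
    (∑ i, f i ^ 2) = 1 ∧ (∑ i, f i) = 0 ∧
    x = ∑ i, ∑ j, (H.dist i j : ℝ) * f i * f j} with hSH
  set SG := {x : ℝ | ∃ f : V → ℝ,
    (∑ i, f i ^ 2) = 1 ∧ (∑ i, f i) = 0 ∧
    x = ∑ i, ∑ j, (G.dist i j : ℝ) * f i * f j} with hSG
  set M : ℕ := Finset.univ.sup (fun p : V × V => G.dist p.1 p.2) with hM
  have hbdd : BddAbove SG := by
    refine ⟨(Fintype.card V : ℝ) * ((Fintype.card V : ℝ) * M), ?_⟩
    rintro x ⟨f, h1, h2, rfl⟩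
    have habs : ∀ i, |f i| ≤ 1 := by
      intro i
      have hsq : f i ^ 2 ≤ 1 := by
        rw [← h1]
        exact Finset.single_le_sum (fun j _ => sq_nonneg (f j)) (Finset.mem_univ i)
      exact (sq_le_one_iff_abs_le_one (f i)).mp hsq
    have hterm : ∀ i j : V, (G.dist i j : ℝ) * f i * f j ≤ (M : ℝ) := by
      intro i j
      have hd : (G.dist i j : ℝ) ≤ (M : ℝ) := by
        exact_mod_cast Nat.cast_le.mpr (Finset.le_sup (f := fun p : V × V => G.dist p.1 p.2)
          (Finset.mem_univ (i, j)))
      calc (G.dist i j : ℝ) * f i * f j ≤ |(G.dist i j : ℝ) * f i * f j| := le_abs_self _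
        _ = (G.dist i j : ℝ) * |f i| * |f j| := by
            rw [abs_mul, abs_mul, abs_of_nonneg (by positivity : (0:ℝ) ≤ (G.dist i j : ℝ))]
        _ ≤ (M : ℝ) * 1 * 1 := by
            apply mul_le_mul (mul_le_mul hd (habs i) (abs_nonneg _) (by positivity))
              (habs j) (abs_nonneg _) (by positivity)
        _ = (M : ℝ) := by ring
    calc ∑ i, ∑ j, (G.dist i j : ℝ) * f i * f j
        ≤ ∑ _i : V, ∑ _j : V, (M : ℝ) := by
          apply Finset.sum_le_sum; intro i _
          apply Finset.sum_le_sum; intro j _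
          exact hterm i j
      _ = (Fintype.card V : ℝ) * ((Fintype.card V : ℝ) * M) := by
          simp [Finset.sum_const, Finset.card_univ, mul_comm, mul_assoc]
  have hne : SH.Nonempty := by
    have hcard : 1 < Fintype.card ↥W := by
      rw [Fintype.card_coe]; omega
    obtain ⟨a, b, hab⟩ := Fintype.exists_pair_of_one_lt_card hcard
    set c : ℝ := (Real.sqrt 2)⁻¹ with hc
    set f : ↥W → ℝ := fun i => if i = a then c else if i = b then -c else 0 with hf
    have hc2 : c ^ 2 = 1 / 2 := by
      rw [hc, inv_pow, Real.sq_sqrt (by norm_num : (0:ℝ) ≤ 2)]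
      norm_num
    have hfp : ∀ i, f i = c * (if i = a then (1:ℝ) else 0) + (-c) * (if i = b then 1 else 0) := by
      intro i
      by_cases h1 : i = a
      · have hib : i ≠ b := by rw [h1]; exact hab
        simp [hf, h1, hib, hab, Ne.symm hab]
      · by_cases h2 : i = b
        · simp [hf, h1, h2, hab, Ne.symm hab]
        · simp [hf, h1, h2]
    have hsq : ∀ i, f i ^ 2 =
        c ^ 2 * (if i = a then (1:ℝ) else 0) + c ^ 2 * (if i = b then 1 else 0) := by
      intro i
      rw [hfp i]
      by_cases h1 : i = a
      · have hib : i ≠ b := by rw [h1]; exact hab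
        simp [h1, hib, hab, Ne.symm hab]
      · by_cases h2 : i = b
        · simp [h1, h2, hab, Ne.symm hab]
        · simp [h1, h2]
    have h1 : (∑ i, f i ^ 2) = 1 := by
      simp only [hsq]
      rw [Finset.sum_add_distrib, ← Finset.mul_sum, ← Finset.mul_sum]
      simp [Finset.sum_ite_eq', hc2]
      norm_num
    have h2 : (∑ i, f i) = 0 := by
      simp only [hfp]
      rw [Finset.sum_add_distrib, ← Finset.mul_sum, ← Finset.mul_sum]
      simp [Finset.sum_ite_eq']
    exact ⟨_, f, h1, h2, rfl⟩
  have hsubset : SH ⊆ SG := by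
    rintro x ⟨f, h1, h2, rfl⟩
    set g : V → ℝ := fun v => if h : v ∈ W then f ⟨v, h⟩ else 0 with hg
    have hg0 : ∀ v ∉ W, g v = 0 := fun v hv => dif_neg hv
    have hgc : ∀ i : ↥W, g ↑i = f i := fun i => dif_pos i.2
    refine ⟨g, ?_, ?_, ?_⟩
    · rw [ext_sum W (fun v => g v ^ 2) (fun v hv => by
        show g v ^ 2 = 0; rw [hg0 v hv]; ring)]
      simp only [hgc]; exact h1
    · rw [ext_sum W g hg0]; simp only [hgc]; exact h2
    · rw [ext_sum W (fun i => ∑ j, (G.dist i j : ℝ) * g i * g j)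
        (fun v hv => by simp [hg0 v hv])]
      refine Finset.sum_congr rfl fun i _ => ?_
      rw [ext_sum W (fun j => (G.dist (i:V) j : ℝ) * g (i:V) * g j)
        (fun v hv => by simp [hg0 v hv])]
      refine Finset.sum_congr rfl fun j _ => ?_
      rw [hgc i, hgc j, hiso i j]
  exact csSup_le_csSup hbdd hne hsubset
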